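/- Let n ≥ 1, let η = (η_{pq}) be an invertible skew-symmetric n×n complex matrix, let U ⊆ ℂ^{2n} be open with coordinates (z₁,…,z_n,θ₁,…,θ_n), and let W : U → ℂ be holomorphic satisfying Plebański's second heavenly equations ∂²W/∂θ_i∂z_j − ∂²W/∂θ_j∂z_i = Σ_{p,q} η_{pq}·(∂²W/∂θ_i∂θ_p)·(∂²W/∂θ_j∂θ_q) on U for all i, j. Set W_i = ∂W/∂θ_i and define vector fields v_i = ∂/∂θ_i and h_i = ∂/∂z_i + Σ_{p,q} η_{pq}·(∂W_i/∂θ_p)·∂/∂θ_q. Then for every ε ∈ ℂ∖{0} the vector fields h_i + ε⁻¹v_i pairwise commute on U. -/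

import Mathlib

/-!
A holomorphic function on an open subset of a finite-dimensional complex space is smooth: each
directional derivative is the Cauchy integral `(2πi)⁻¹ ∮ f (y + z • e) / z² dz`, which can be
differentiated in `y` under the integral sign thanks to the Cauchy estimates. Hence all partial
derivatives of `W` commute.

The `z`-components of `h_i + ε⁻¹ v_i` are constant, so with `S_ip = ∂²W/∂θ_i∂θ_p` the
`θ_q`-component of the bracket is `∑_p η_pq ((h_i + ε⁻¹ v_i) S_jp - (h_j + ε⁻¹ v_j) S_ip)`.
The `ε⁻¹`-terms cancel by the symmetry of third derivatives, and the rest is the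
`θ_p`-derivative of the heavenly equation, up to a term that vanishes by skew-symmetry of `η`.
-/

noncomputable def vecBracket {E : Type*} [NormedAddCommGroup E] [NormedSpace ℂ E]
    (X Y : E → E) (x : E) : E :=
  fderiv ℂ Y x (X x) - fderiv ℂ X x (Y x)

noncomputable def dz {n : ℕ} (f : (Fin n → ℂ) × (Fin n → ℂ) → ℂ) (j : Fin n)
    (x : (Fin n → ℂ) × (Fin n → ℂ)) : ℂ :=
  fderiv ℂ f x (Pi.single j 1, 0)

noncomputable def dθ {n : ℕ} (f : (Fin n → ℂ) × (Fin n → ℂ) → ℂ) (j : Fin n)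
    (x : (Fin n → ℂ) × (Fin n → ℂ)) : ℂ :=
  fderiv ℂ f x (0, Pi.single j 1)

open Complex Metric Set Filter Topology MeasureTheory
open scoped Real ContDiff

section Holomorphic

variable {E F : Type*} [NormedAddCommGroup E] [NormedSpace ℂ E] [NormedAddCommGroup F]
  [NormedSpace ℂ F] {U : Set E}

theorem norm_fderiv_le_of_forall_norm_le {f : E → F} {p : E} {R M : ℝ} (hR : 0 < R)
    (hf : DifferentiableOn ℂ f (ball p R)) (hM : ∀ y ∈ ball p R, ‖f y‖ ≤ M) :
    ‖fderiv ℂ f p‖ ≤ 2 * M / R :=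
  Complex.norm_fderiv_le_div_of_mapsTo_ball hf (fun y hy => mem_closedBall_iff_norm.2 <|
    (norm_sub_le _ _).trans (by linarith [hM y hy, hM p (mem_ball_self hR)])) hR

theorem fderiv_apply_eq_circleIntegral [CompleteSpace F] {f : E → F} (hU : IsOpen U)
    (hf : DifferentiableOn ℂ f U) {y e : E} {r : ℝ} (hr : 0 < r)
    (hline : ∀ z : ℂ, ‖z‖ ≤ r → y + z • e ∈ U) :
    fderiv ℂ f y e = (2 * π * I : ℂ)⁻¹ • ∮ z in C(0, r), (z ^ 2)⁻¹ • f (y + z • e) := by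
  have hy : DifferentiableAt ℂ f y :=
    hf.differentiableAt (hU.mem_nhds (by simpa using hline 0 (by simp [hr.le])))
  have hcauchy := two_pi_I_inv_smul_circleIntegral_sub_sq_inv_smul_of_differentiable
    (hU.preimage (by fun_prop)) (fun z hz => hline z (mem_closedBall_zero_iff.1 hz))
    (hf.comp (by fun_prop) (mapsTo_preimage _ _)) (mem_ball_self hr)
  simp only [sub_zero] at hcauchy
  rw [← HasDerivAt.deriv (hy.hasFDerivAt.hasLineDerivAt e)]
  exact hcauchy.symm

theorem differentiableAt_circleIntegral_comp_add_smul [FiniteDimensional ℂ E] {f : E → ℂ}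
    {V s : Set E} {x e : E} {r C : ℝ} (hr : 0 < r) (hf : ∀ p ∈ V, DifferentiableAt ℂ f p)
    (hC : ∀ p ∈ V, ‖fderiv ℂ f p‖ ≤ C) (hs : s ∈ 𝓝 x)
    (hsV : ∀ y ∈ s, ∀ z : ℂ, ‖z‖ = r → y + z • e ∈ V) :
    DifferentiableAt ℂ (fun y => ∮ z in C(0, r), (z ^ 2)⁻¹ • f (y + z • e)) x := by
  borelize E
  set c := circleMap 0 r
  have hcV : ∀ y ∈ s, ∀ θ, y + c θ • e ∈ V := fun y hy θ =>
    hsV y hy _ (by simp [c, abs_of_pos hr])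
  have hnorm : ∀ θ, ‖c θ‖ = r := fun θ => by simp [c, abs_of_pos hr]
  have hc0 : ∀ θ, c θ ^ 2 ≠ 0 := fun θ => pow_ne_zero 2 (circleMap_ne_center hr.ne')
  have hcont : ∀ y ∈ s, Continuous fun θ => (c θ * I) • (c θ ^ 2)⁻¹ • f (y + c θ • e) := by
    intro y hy
    have hfc : Continuous fun θ => f (y + c θ • e) := continuous_iff_continuousAt.2 fun θ =>
      (hf _ (hcV y hy θ)).continuousAt.comp (g := f) (f := fun θ => y + c θ • e) (by fun_prop)
    exact ((continuous_circleMap 0 r).mul continuous_const).smul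
      (((continuous_circleMap 0 r).pow 2).inv₀ hc0 |>.smul hfc)
  simp only [circleIntegral, deriv_circleMap]
  refine HasFDerivAt.differentiableAt <|
    intervalIntegral.hasFDerivAt_integral_of_dominated_of_fderiv_le
      (F' := fun y θ => (c θ * I) • (c θ ^ 2)⁻¹ • fderiv ℂ f (y + c θ • e))
      (bound := fun _ => r * (r ^ 2)⁻¹ * C) hs ?_ ?_ ?_ ?_ intervalIntegrable_const ?_
  · filter_upwards [hs] with y hy using (hcont y hy).aestronglyMeasurable
  · exact (hcont x (mem_of_mem_nhds hs)).intervalIntegrable _ _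
  · exact ((continuous_circleMap 0 r).mul continuous_const).aestronglyMeasurable.smul
      ((((continuous_circleMap 0 r).pow 2).inv₀ hc0).aestronglyMeasurable.smul
      ((measurable_fderiv ℂ f).comp (by fun_prop)).aestronglyMeasurable)
  · refine ae_of_all _ fun θ _ y hy => ?_
    rw [norm_smul, norm_smul, norm_mul, norm_inv, norm_pow, hnorm, norm_I, mul_one, ← mul_assoc]
    gcongr
    exact hC _ (hcV y hy θ)
  · refine ae_of_all _ fun θ _ y hy => ?_
    have hfy : HasFDerivAt (fun y' => f (y' + c θ • e)) (fderiv ℂ f (y + c θ • e)) y := by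
      have := (hf _ (hcV y hy θ)).hasFDerivAt.comp y ((hasFDerivAt_id y).add_const (c θ • e))
      rwa [ContinuousLinearMap.comp_id] at this
    exact (hfy.const_smul ((c θ ^ 2)⁻¹)).const_smul (c θ * I)

theorem DifferentiableOn.differentiableAt_fderiv_apply [FiniteDimensional ℂ E] {f : E → ℂ}
    (hf : DifferentiableOn ℂ f U) (hU : IsOpen U) (e : E) {x : E} (hx : x ∈ U) :
    DifferentiableAt ℂ (fun y => fderiv ℂ f y e) x := by
  obtain ⟨ρ, hρ, hρU⟩ : ∃ ρ > 0, ∀ y ∈ ball x ρ, y ∈ U ∧ ‖f y‖ < ‖f x‖ + 1 :=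
    eventually_nhds_iff_ball.1 <| (hU.eventually_mem hx).and <|
      (hf.continuousOn.continuousAt (hU.mem_nhds hx)).norm.eventually (gt_mem_nhds (lt_add_one _))
  obtain ⟨r, hr, hre⟩ : ∃ r > 0, r * ‖e‖ < ρ / 4 := by
    refine ⟨ρ / (4 * (‖e‖ + 1)), by positivity, ?_⟩
    calc ρ / (4 * (‖e‖ + 1)) * ‖e‖ < ρ / (4 * (‖e‖ + 1)) * (‖e‖ + 1) := by gcongr; linarith
      _ = ρ / 4 := by field_simp
  have hline : ∀ y ∈ ball x (ρ / 4), ∀ z : ℂ, ‖z‖ ≤ r → y + z • e ∈ ball x (ρ / 2) := by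
    intro y hy z hz
    have hze : ‖z • e‖ < ρ / 4 := by
      rw [norm_smul]
      exact lt_of_le_of_lt (by gcongr) hre
    rw [mem_ball_iff_norm] at hy ⊢
    calc ‖y + z • e - x‖ = ‖(y - x) + z • e‖ := by abel_nf
      _ ≤ ‖y - x‖ + ‖z • e‖ := norm_add_le _ _
      _ < ρ / 2 := by linarith
  have hbound : ∀ p ∈ ball x (ρ / 2), ‖fderiv ℂ f p‖ ≤ 2 * (‖f x‖ + 1) / (ρ / 2) := by
    intro p hp
    have hsub : ball p (ρ / 2) ⊆ ball x ρ :=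
      ball_subset_ball' (by linarith [mem_ball.1 hp])
    exact norm_fderiv_le_of_forall_norm_le (by positivity)
      (hf.mono fun y hy => (hρU y (hsub hy)).1) fun y hy => (hρU y (hsub hy)).2.le
  have hcauchy : (fun y => fderiv ℂ f y e) =ᶠ[𝓝 x]
      fun y => (2 * π * I : ℂ)⁻¹ • ∮ z in C(0, r), (z ^ 2)⁻¹ • f (y + z • e) := by
    filter_upwards [ball_mem_nhds x (by positivity : 0 < ρ / 4)] with y hy
    exact fderiv_apply_eq_circleIntegral hU hf hr fun z hz =>
      (hρU _ (ball_subset_ball (by linarith) (hline y hy z hz))).1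
  refine DifferentiableAt.congr_of_eventuallyEq ?_ hcauchy
  exact (differentiableAt_circleIntegral_comp_add_smul hr (V := ball x (ρ / 2))
    (fun p hp => hf.differentiableAt (hU.mem_nhds (hρU p (ball_subset_ball (by linarith) hp)).1))
    hbound (ball_mem_nhds x (by positivity : 0 < ρ / 4))
    fun y hy z hz => hline y hy z hz.le).const_smul ((2 * π * I : ℂ)⁻¹)

theorem DifferentiableOn.contDiffOn_of_finiteDimensional [FiniteDimensional ℂ E] {f : E → ℂ}
    (hf : DifferentiableOn ℂ f U) (hU : IsOpen U) : ContDiffOn ℂ ∞ f U := by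
  refine contDiffOn_infty.2 fun n => ?_
  induction n generalizing f with
  | zero => exact contDiffOn_zero.2 hf.continuousOn
  | succ n ih =>
    push_cast
    refine contDiffOn_succ_of_fderiv_apply hf (fun h => by simp at h) fun e => ?_
    refine (ih fun y hy => (hf.differentiableAt_fderiv_apply hU e hy).differentiableWithinAt).congr
      fun y hy => ?_
    rw [fderivWithin_of_isOpen hU hy]

end Holomorphic

section Smooth

variable {𝕜 E F : Type*} [RCLike 𝕜] [NormedAddCommGroup E] [NormedSpace 𝕜 E]
  [NormedAddCommGroup F] [NormedSpace 𝕜 F] {f : E → F} {U : Set E} {x : E}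

theorem ContDiffOn.fderiv_apply_of_isOpen {m n : WithTop ℕ∞} (hf : ContDiffOn 𝕜 n f U)
    (hU : IsOpen U) (hmn : m + 1 ≤ n) (u : E) :
    ContDiffOn 𝕜 m (fun y => fderiv 𝕜 f y u) U :=
  (hf.fderiv_of_isOpen hU hmn).clm_apply contDiffOn_const

theorem ContDiffAt.fderiv_fderiv_apply_comm (hf : ContDiffAt 𝕜 2 f x) (u v : E) :
    fderiv 𝕜 (fun y => fderiv 𝕜 f y u) x v = fderiv 𝕜 (fun y => fderiv 𝕜 f y v) x u := by
  have hd : DifferentiableAt 𝕜 (fderiv 𝕜 f) x :=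
    (hf.fderiv_right (m := 1) le_rfl).differentiableAt one_ne_zero
  have happly : ∀ w, fderiv 𝕜 (fun y => fderiv 𝕜 f y w) x = (fderiv 𝕜 (fderiv 𝕜 f) x).flip w :=
    fun w => by simp [fderiv_clm_apply hd (differentiableAt_const w)]
  rw [happly, happly]
  exact hf.isSymmSndFDerivAt (by simp) v u

theorem ContDiffOn.fderiv_fderiv_apply_comm_eventually (hf : ContDiffOn 𝕜 2 f U) (hU : IsOpen U)
    (hx : x ∈ U) (u v : E) :
    (fun y => fderiv 𝕜 (fun y' => fderiv 𝕜 f y' u) y v) =ᶠ[𝓝 x]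
      fun y => fderiv 𝕜 (fun y' => fderiv 𝕜 f y' v) y u := by
  filter_upwards [hU.mem_nhds hx] with y hy
  exact (hf.contDiffAt (hU.mem_nhds hy)).fderiv_fderiv_apply_comm u v

end Smooth

theorem sum_sum_mul_mul_eq_neg_of_transpose_eq_neg {ι R : Type*} [Fintype ι] [CommRing R]
    {η : Matrix ι ι R} (hη : η.transpose = -η) (s t : ι → R) :
    ∑ a, ∑ b, η a b * s a * t b = -∑ a, ∑ b, η a b * t a * s b := by
  have hswap : ∀ a b, η b a = -η a b := fun a b => by
    simpa using congrFun (congrFun hη a) b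
  rw [Finset.sum_comm, ← Finset.sum_neg_distrib]
  refine Finset.sum_congr rfl fun b _ => ?_
  rw [← Finset.sum_neg_distrib]
  refine Finset.sum_congr rfl fun a _ => ?_
  rw [hswap]
  ring

section Plebanski

variable {n : ℕ} {η : Matrix (Fin n) (Fin n) ℂ} {U : Set ((Fin n → ℂ) × (Fin n → ℂ))}
  {W : (Fin n → ℂ) × (Fin n → ℂ) → ℂ} {x : (Fin n → ℂ) × (Fin n → ℂ)}

theorem fderiv_apply_eq_sum_dz_add_sum_dθ (g : (Fin n → ℂ) × (Fin n → ℂ) → ℂ)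
    (x : (Fin n → ℂ) × (Fin n → ℂ)) (a b : Fin n → ℂ) :
    fderiv ℂ g x (a, b) = ∑ k, a k * dz g k x + ∑ k, b k * dθ g k x := by
  have hab : ((a, b) : (Fin n → ℂ) × (Fin n → ℂ)) =
      ∑ k, a k • ((Pi.single k 1, 0) : (Fin n → ℂ) × (Fin n → ℂ)) +
        ∑ k, b k • ((0, Pi.single k 1) : (Fin n → ℂ) × (Fin n → ℂ)) := by
    refine Prod.ext ?_ ?_ <;>
      simp [Prod.fst_sum, Prod.snd_sum, ← Pi.single_smul, Finset.univ_sum_single]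
  rw [hab, map_add, map_sum, map_sum]
  simp only [map_smul, smul_eq_mul, dz, dθ]

/-- The vector field `h_i + ε⁻¹ v_i`. -/
noncomputable def pencilField (η : Matrix (Fin n) (Fin n) ℂ)
    (W : (Fin n → ℂ) × (Fin n → ℂ) → ℂ) (ε : ℂ) (i : Fin n) (y : (Fin n → ℂ) × (Fin n → ℂ)) :
    (Fin n → ℂ) × (Fin n → ℂ) :=
  (Pi.single i 1, fun q => ∑ p, η p q * dθ (dθ W i) p y + ε⁻¹ * (Pi.single i 1 : Fin n → ℂ) q)

theorem fderiv_apply_pencilField (g : (Fin n → ℂ) × (Fin n → ℂ) → ℂ) (ε : ℂ) (i : Fin n) :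
    fderiv ℂ g x (pencilField η W ε i x) =
      dz g i x + ∑ a, ∑ k, η a k * dθ (dθ W i) a x * dθ g k x + ε⁻¹ * dθ g i x := by
  rw [pencilField, fderiv_apply_eq_sum_dz_add_sum_dθ]
  simp only [add_mul, Finset.sum_add_distrib, Finset.sum_mul, mul_assoc]
  rw [Finset.sum_comm (γ := Fin n) (f := fun k a => η a k * (dθ (dθ W i) a x * dθ g k x))]
  simp [Pi.single_apply, add_assoc]

theorem ContDiffOn.dθ (hW : ContDiffOn ℂ ∞ W U) (hU : IsOpen U) (j : Fin n) :
    ContDiffOn ℂ ∞ (dθ W j) U :=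
  hW.fderiv_apply_of_isOpen hU le_rfl _

theorem ContDiffOn.dz (hW : ContDiffOn ℂ ∞ W U) (hU : IsOpen U) (j : Fin n) :
    ContDiffOn ℂ ∞ (dz W j) U :=
  hW.fderiv_apply_of_isOpen hU le_rfl _

theorem dθ_dz_comm (hW : ContDiffOn ℂ ∞ W U) (hU : IsOpen U) (hx : x ∈ U) (i j : Fin n) :
    dθ (dz W j) i x = dz (dθ W i) j x :=
  ((hW.contDiffAt (hU.mem_nhds hx)).of_le ENat.LEInfty.out).fderiv_fderiv_apply_comm _ _

theorem dθ_dθ_comm (hW : ContDiffOn ℂ ∞ W U) (hU : IsOpen U) (hx : x ∈ U) (i j : Fin n) :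
    dθ (dθ W j) i x = dθ (dθ W i) j x :=
  ((hW.contDiffAt (hU.mem_nhds hx)).of_le ENat.LEInfty.out).fderiv_fderiv_apply_comm _ _

theorem dθ_dθ_dθ_comm (hW : ContDiffOn ℂ ∞ W U) (hU : IsOpen U) (hx : x ∈ U) (i j p : Fin n) :
    dθ (dθ (dθ W j) p) i x = dθ (dθ (dθ W i) p) j x := by
  calc dθ (dθ (dθ W j) p) i x = dθ (dθ (dθ W j) i) p x := dθ_dθ_comm (hW.dθ hU j) hU hx i p
    _ = dθ (dθ (dθ W i) j) p x := by
      have hinner : dθ (dθ W j) i =ᶠ[𝓝 x] dθ (dθ W i) j :=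
        (hW.of_le ENat.LEInfty.out).fderiv_fderiv_apply_comm_eventually hU hx _ _
      exact DFunLike.congr_fun hinner.fderiv_eq (0, Pi.single p 1)
    _ = dθ (dθ (dθ W i) p) j x := dθ_dθ_comm (hW.dθ hU i) hU hx p j

theorem dθ_heavenly (hW : ContDiffOn ℂ ∞ W U) (hU : IsOpen U)
    (heavenly : ∀ i j, ∀ y ∈ U, dz (dθ W i) j y - dz (dθ W j) i y =
      ∑ a, ∑ b, η a b * dθ (dθ W i) a y * dθ (dθ W j) b y)
    (hx : x ∈ U) (i j p : Fin n) :
    dz (dθ (dθ W i) p) j x - dz (dθ (dθ W j) p) i x =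
      ∑ a, ∑ b, η a b * dθ (dθ (dθ W i) a) p x * dθ (dθ W j) b x +
        ∑ a, ∑ b, η a b * dθ (dθ W i) a x * dθ (dθ (dθ W j) b) p x := by
  have hd : ∀ g : (Fin n → ℂ) × (Fin n → ℂ) → ℂ, ContDiffOn ℂ ∞ g U → DifferentiableAt ℂ g x :=
    fun g hg => (hg.contDiffAt (hU.mem_nhds hx)).differentiableAt (by simp)
  have hS : ∀ m a, DifferentiableAt ℂ (dθ (dθ W m) a) x := fun m a =>
    hd _ ((hW.dθ hU m).dθ hU a)
  have hev : (fun y => dz (dθ W i) j y - dz (dθ W j) i y) =ᶠ[𝓝 x]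
      fun y => ∑ a, ∑ b, η a b * dθ (dθ W i) a y * dθ (dθ W j) b y :=
    Filter.eventually_of_mem (hU.mem_nhds hx) (heavenly i j)
  have hθp := DFunLike.congr_fun (hev.fderiv_eq (𝕜 := ℂ)) (0, Pi.single p 1)
  have hR : HasFDerivAt (fun y => ∑ a, ∑ b, η a b * dθ (dθ W i) a y * dθ (dθ W j) b y)
      (∑ a, ∑ b, η a b • (dθ (dθ W i) a x • fderiv ℂ (dθ (dθ W j) b) x +
        dθ (dθ W j) b x • fderiv ℂ (dθ (dθ W i) a) x)) x :=
    HasFDerivAt.fun_sum fun a _ => HasFDerivAt.fun_sum fun b _ => by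
      simpa only [mul_assoc] using
        ((hS i a).hasFDerivAt.fun_mul (hS j b).hasFDerivAt).const_mul (η a b)
  rw [fderiv_fun_sub (hd _ ((hW.dθ hU i).dz hU j)) (hd _ ((hW.dθ hU j).dz hU i)), hR.fderiv]
    at hθp
  simp only [sub_apply, sum_apply, smul_apply, add_apply, smul_eq_mul] at hθp
  rw [← dθ_dz_comm (hW.dθ hU i) hU hx, ← dθ_dz_comm (hW.dθ hU j) hU hx]
  refine hθp.trans ?_
  simp only [mul_add, Finset.sum_add_distrib]
  rw [add_comm]
  unfold dθ
  congr 1 <;> exact Finset.sum_congr rfl fun a _ => Finset.sum_congr rfl fun b _ => by ring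

theorem fderiv_dθ_dθ_apply_pencilField_comm (hskew : η.transpose = -η)
    (hW : ContDiffOn ℂ ∞ W U) (hU : IsOpen U)
    (heavenly : ∀ i j, ∀ y ∈ U, dz (dθ W i) j y - dz (dθ W j) i y =
      ∑ a, ∑ b, η a b * dθ (dθ W i) a y * dθ (dθ W j) b y)
    (hx : x ∈ U) (ε : ℂ) (i j p : Fin n) :
    fderiv ℂ (dθ (dθ W j) p) x (pencilField η W ε i x) =
      fderiv ℂ (dθ (dθ W i) p) x (pencilField η W ε j x) := by
  have houter : ∀ m m', ∑ a, ∑ k, η a k * dθ (dθ W m') a x * dθ (dθ (dθ W m) p) k x =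
      ∑ a, ∑ b, η a b * dθ (dθ W m') a x * dθ (dθ (dθ W m) b) p x := fun m m' =>
    Finset.sum_congr rfl fun a _ => Finset.sum_congr rfl fun b _ => by
      rw [dθ_dθ_comm (hW.dθ hU m) hU hx b p]
  rw [fderiv_apply_pencilField, fderiv_apply_pencilField, dθ_dθ_dθ_comm hW hU hx i j p,
    houter, houter]
  linear_combination -(dθ_heavenly hW hU heavenly hx i j p) -
    sum_sum_mul_mul_eq_neg_of_transpose_eq_neg hskew (fun a => dθ (dθ (dθ W i) a) p x)
      (fun b => dθ (dθ W j) b x)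

theorem hasFDerivAt_pencilField (ε : ℂ) (i : Fin n)
    (hS : ∀ p, DifferentiableAt ℂ (dθ (dθ W i) p) x) :
    HasFDerivAt (pencilField η W ε i)
      ((0 : ((Fin n → ℂ) × (Fin n → ℂ)) →L[ℂ] (Fin n → ℂ)).prod
        (ContinuousLinearMap.pi fun q => ∑ p, η p q • fderiv ℂ (dθ (dθ W i) p) x)) x :=
  (hasFDerivAt_const _ x).prodMk <| hasFDerivAt_pi.2 fun q =>
    (HasFDerivAt.fun_sum fun p _ => (hS p).hasFDerivAt.const_mul (η p q)).add_const _

theorem vecBracket_pencilField_eq_zero (hskew : η.transpose = -η)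
    (hW : ContDiffOn ℂ ∞ W U) (hU : IsOpen U)
    (heavenly : ∀ i j, ∀ y ∈ U, dz (dθ W i) j y - dz (dθ W j) i y =
      ∑ a, ∑ b, η a b * dθ (dθ W i) a y * dθ (dθ W j) b y)
    (hx : x ∈ U) (ε : ℂ) (i j : Fin n) :
    vecBracket (pencilField η W ε i) (pencilField η W ε j) x = 0 := by
  have hS : ∀ m p, DifferentiableAt ℂ (dθ (dθ W m) p) x := fun m p =>
    (((hW.dθ hU m).dθ hU p).contDiffAt (hU.mem_nhds hx)).differentiableAt (by simp)
  rw [vecBracket, (hasFDerivAt_pencilField ε i (hS i)).fderiv,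
    (hasFDerivAt_pencilField ε j (hS j)).fderiv]
  refine Prod.ext (by simp) (funext fun q => ?_)
  simp [fderiv_dθ_dθ_apply_pencilField_comm hskew hW hU heavenly hx ε i j]

end Plebanski

theorem heavenly_implies_flat_general (n : ℕ) (η : Matrix (Fin n) (Fin n) ℂ)
    (hskew : η.transpose = -η)
    (U : Set ((Fin n → ℂ) × (Fin n → ℂ))) (hU : IsOpen U)
    (W : (Fin n → ℂ) × (Fin n → ℂ) → ℂ) (hW : DifferentiableOn ℂ W U)
    (heavenly : ∀ i j, ∀ x ∈ U,
      dz (fun y => dθ W i y) j x - dz (fun y => dθ W j y) i x =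
        ∑ p, ∑ q, η p q * dθ (fun y => dθ W i y) p x * dθ (fun y => dθ W j y) q x)
    (v h : Fin n → ((Fin n → ℂ) × (Fin n → ℂ)) → (Fin n → ℂ) × (Fin n → ℂ))
    (hv : ∀ i x, v i x = (0, Pi.single i 1))
    (hh : ∀ i x, h i x =
      (Pi.single i 1, fun q => ∑ p, η p q * dθ (fun y => dθ W i y) p x)) :
    ∀ ε : ℂ, ε ≠ 0 → ∀ i j, ∀ x ∈ U,
      vecBracket (fun y => h i y + ε⁻¹ • v i y) (fun y => h j y + ε⁻¹ • v j y) x = 0 := by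
  intro ε _ i j x hx
  have hfield : ∀ m, (fun y => h m y + ε⁻¹ • v m y) = pencilField η W ε m := fun m =>
    funext fun y => by rw [hh, hv]; ext q <;> simp [pencilField]
  rw [hfield, hfield]
  exact vecBracket_pencilField_eq_zero hskew (hW.contDiffOn_of_finiteDimensional hU) hU
    heavenly hx ε i j

/-- If the Plebański function `W` satisfies Plebański's second heavenly equations
`∂²W/∂θ_i∂z_j − ∂²W/∂θ_j∂z_i = Σ_{p,q} η_{pq}·(∂²W/∂θ_i∂θ_p)·(∂²W/∂θ_j∂θ_q)`,
then with `W_i = ∂W/∂θ_i`, `v_i = ∂/∂θ_i` and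
`h_i = ∂/∂z_i + Σ_{p,q} η_{pq}·(∂W_i/∂θ_p)·∂/∂θ_q`, the vector fields `h_i + ε⁻¹v_i`
pairwise commute for every `ε ∈ ℂ∖{0}`. -/
theorem heavenly_implies_flat (n : ℕ) (hn : 1 ≤ n) (η : Matrix (Fin n) (Fin n) ℂ)
    (hη : IsUnit η) (hskew : η.transpose = -η)
    (U : Set ((Fin n → ℂ) × (Fin n → ℂ))) (hU : IsOpen U)
    (W : (Fin n → ℂ) × (Fin n → ℂ) → ℂ) (hW : DifferentiableOn ℂ W U)
    (heavenly : ∀ i j, ∀ x ∈ U,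
      dz (fun y => dθ W i y) j x - dz (fun y => dθ W j y) i x =
        ∑ p, ∑ q, η p q * dθ (fun y => dθ W i y) p x * dθ (fun y => dθ W j y) q x)
    (v h : Fin n → ((Fin n → ℂ) × (Fin n → ℂ)) → (Fin n → ℂ) × (Fin n → ℂ))
    (hv : ∀ i x, v i x = (0, Pi.single i 1))
    (hh : ∀ i x, h i x =
      (Pi.single i 1, fun q => ∑ p, η p q * dθ (fun y => dθ W i y) p x)) :
    ∀ ε : ℂ, ε ≠ 0 → ∀ i j, ∀ x ∈ U,
      vecBracket (fun y => h i y + ε⁻¹ • v i y) (fun y => h j y + ε⁻¹ • v j y) x = 0 :=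
  heavenly_implies_flat_general n η hskew U hU W hW heavenly v h hv hh
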